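/- arXiv:1501.06084 — 7 statements merged into one kernel-verified Lean document; each statement's English description precedes it below -/
import Mathlib

section
/- Let λ, ξ, k, T > 0 be real numbers. There exists η ≥ 1 such that η²λξ²T² − 2η(1 + kT) + 2 ≤ 0 if and only if both (√(2λ)·ξ − k)·T ≤ 1 and, in addition, either 2λξ²T ≤ k + √(k² + 4λξ²), or k + √(k² + 4λξ²) < 2λξ²T ≤ 4k. -/
/-!
Put `a = λξ²T²` and `b = 1 + kT`, so that the condition reads `f(η) = aη² − 2bη + 2 ≤ 0`.
If `f(1) = a − 2b + 2 ≤ 0` then `η = 1` works. Otherwise the minimum of `f` on `[1, ∞)` is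
attained at the vertex `b/a`, which lies in `[1, ∞)` exactly when `a ≤ b`, and there
`f(b/a) = 2 − b²/a`; so the condition is `b ≥ √(2a)` together with `a ≤ b ∨ a ≤ 2b − 2`.
Translating back, `a ≤ b` is `λξ²T² − kT − 1 ≤ 0`, i.e. `T` is at most the positive root
`(k + √(k² + 4λξ²))/(2λξ²)`, and `a ≤ 2b − 2` is `λξ²T ≤ 2k`.
-/

lemma quadratic_pos_of_one_le {a b η : ℝ} (ha : 0 < a) (hb : b < a) (hb' : 2 * b - 2 < a)
    (hη : 1 ≤ η) : 0 < η ^ 2 * a - 2 * η * b + 2 := by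
  have hexpand : η ^ 2 * a - 2 * η * b + 2 =
      a * (η - 1) ^ 2 + 2 * (a - b) * (η - 1) + (a - 2 * b + 2) := by ring
  rw [hexpand]
  have hsq : 0 ≤ a * (η - 1) ^ 2 := by positivity
  have hslope : 0 ≤ 2 * (a - b) * (η - 1) := mul_nonneg (by linarith) (by linarith)
  linarith

lemma exists_one_le_quadratic_nonpos_iff {a b : ℝ} (ha : 0 < a) :
    (∃ η : ℝ, 1 ≤ η ∧ η ^ 2 * a - 2 * η * b + 2 ≤ 0) ↔
      √(2 * a) ≤ b ∧ (a ≤ b ∨ a ≤ 2 * b - 2) := by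
  constructor
  · rintro ⟨η, hη, hf⟩
    refine ⟨Real.sqrt_le_iff.2 ⟨?_, ?_⟩, ?_⟩
    · nlinarith
    · -- `a · f(η) = (aη − b)² + 2a − b²`
      nlinarith [sq_nonneg (a * η - b), mul_nonpos_of_nonneg_of_nonpos ha.le hf]
    · by_contra! h
      exact (quadratic_pos_of_one_le ha h.1 h.2 hη).not_ge hf
  · rintro ⟨hdisc, hb | hb⟩
    · have hb2 : 2 * a ≤ b ^ 2 := (Real.sqrt_le_iff.1 hdisc).2
      refine ⟨b / a, (one_le_div ha).2 hb, ?_⟩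
      have hvertex : (b / a) ^ 2 * a - 2 * (b / a) * b + 2 = (2 * a - b ^ 2) / a := by
        field_simp
        ring
      rw [hvertex]
      exact div_nonpos_of_nonpos_of_nonneg (by linarith) ha.le
    · exact ⟨1, le_rfl, by linarith⟩

lemma mul_sq_le_one_add_mul_iff {c k T : ℝ} (hc : 0 < c) (hT : 0 ≤ T) :
    c * T ^ 2 ≤ 1 + k * T ↔ 2 * c * T ≤ k + √(k ^ 2 + 4 * c) := by
  set s := √(k ^ 2 + 4 * c)
  have hs : s ^ 2 = k ^ 2 + 4 * c := Real.sq_sqrt (by positivity)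
  have hks : k < s := Real.lt_sqrt_of_sq_lt (by linarith)
  -- `2cT − (k ± s)` are `2c` times the distances of `T` to the two roots of `cx² − kx − 1`.
  have hfactor : 4 * c * (c * T ^ 2 - (1 + k * T)) =
      (2 * c * T - (k + s)) * (2 * c * T - (k - s)) := by linear_combination hs
  have hpos : 0 < 2 * c * T - (k - s) := by nlinarith
  constructor <;> intro h <;> nlinarith

theorem stmt_1_general (lam ξ k T : ℝ) (hlam : 0 < lam) (hξ : 0 < ξ) (hT : 0 < T) :
    (∃ η : ℝ, 1 ≤ η ∧ η ^ 2 * lam * ξ ^ 2 * T ^ 2 - 2 * η * (1 + k * T) + 2 ≤ 0)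
      ↔ ((Real.sqrt (2 * lam) * ξ - k) * T ≤ 1 ∧
          (2 * lam * ξ ^ 2 * T ≤ k + Real.sqrt (k ^ 2 + 4 * lam * ξ ^ 2) ∨
            (k + Real.sqrt (k ^ 2 + 4 * lam * ξ ^ 2) < 2 * lam * ξ ^ 2 * T ∧
              2 * lam * ξ ^ 2 * T ≤ 4 * k))) := by
  have hc : 0 < lam * ξ ^ 2 := by positivity
  have hsqrt : √(2 * (lam * ξ ^ 2 * T ^ 2)) = √(2 * lam) * ξ * T := by
    rw [show 2 * (lam * ξ ^ 2 * T ^ 2) = 2 * lam * (ξ * T) ^ 2 by ring,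
      Real.sqrt_mul' _ (by positivity), Real.sqrt_sq (by positivity), mul_assoc]
  have hdisc : (√(2 * lam) * ξ - k) * T ≤ 1 ↔ √(2 * (lam * ξ ^ 2 * T ^ 2)) ≤ 1 + k * T := by
    rw [hsqrt]
    constructor <;> intro h <;> linarith
  have hroot := mul_sq_le_one_add_mul_iff (k := k) hc hT.le
  simp only [← mul_assoc] at hroot
  have hone : 2 * lam * ξ ^ 2 * T ≤ 4 * k ↔ lam * ξ ^ 2 * T ^ 2 ≤ 2 * (1 + k * T) - 2 := by
    rw [show lam * ξ ^ 2 * T ^ 2 = T / 2 * (2 * lam * ξ ^ 2 * T) by ring,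
      show 2 * (1 + k * T) - 2 = T / 2 * (4 * k) by ring, mul_le_mul_iff_right₀ (by positivity)]
  have hpoly (η : ℝ) : η ^ 2 * lam * ξ ^ 2 * T ^ 2 - 2 * η * (1 + k * T) + 2 =
      η ^ 2 * (lam * ξ ^ 2 * T ^ 2) - 2 * η * (1 + k * T) + 2 := by ring
  simp only [hpoly]
  rw [exists_one_le_quadratic_nonpos_iff (by positivity), hdisc, ← not_le, ← hroot, ← hone]
  tauto

/-- Existence of `η ≥ 1` with `η²λξ²T² − 2η(1+kT) + 2 ≤ 0` is equivalent to the
explicit conditions on the parameters. -/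
theorem stmt_1 (lam ξ k T : ℝ) (hlam : 0 < lam) (hξ : 0 < ξ) (hk : 0 < k) (hT : 0 < T) :
    (∃ η : ℝ, 1 ≤ η ∧ η ^ 2 * lam * ξ ^ 2 * T ^ 2 - 2 * η * (1 + k * T) + 2 ≤ 0)
      ↔ ((Real.sqrt (2 * lam) * ξ - k) * T ≤ 1 ∧
          (2 * lam * ξ ^ 2 * T ≤ k + Real.sqrt (k ^ 2 + 4 * lam * ξ ^ 2) ∨
            (k + Real.sqrt (k ^ 2 + 4 * lam * ξ ^ 2) < 2 * lam * ξ ^ 2 * T ∧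
              2 * lam * ξ ^ 2 * T ≤ 4 * k))) :=
  stmt_1_general lam ξ k T hlam hξ hT
end

section
/- Let k, θ, ξ > 0 and 0 < δt < 1/k, let c ≥ 0 and w ≥ 0, and let Z be a standard normal random variable on a probability space. Then E[exp(c·max(0, w + k(θ − w)·δt + ξ·√(w·δt)·Z))] ≤ exp( c(kθ + νξ)·δt + (c(1 − k·δt) + c²ξ²·δt/2)·w ), where ν = √( ξ²/(4π(1 − k·δt)²) + (1/(2π))·√( ξ⁴/(4(1 − k·δt)⁴) + k²θ²/(1 − k·δt)² ) ). -/
/-!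
Write `Y = a + σ Z` for the untruncated step. For every scale `s > 0`,
`exp(c · max 0 y) ≤ exp(c y) + (c s / e) exp(-y / s)` pointwise (for `y < 0` use
`1 + c y ≤ exp(c y)` and `e u ≤ exp u`), and both terms on the right have explicit Gaussian
expectations. With `s = ξ² δt / (1 - k δt)` we get `σ² / (2 s) = (1 - k δt) w / 2 ≤ a`,
so the second expectation is at most `c s / e`, and `s / e ≤ ν ξ δt` because `2π ≤ e²`.
Finally `X + t ≤ X exp t` for `X ≥ 1` and `t ≥ 0`.
-/

open MeasureTheory ProbabilityTheory Real
open scoped NNReal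

lemma lintegral_ofReal_exp_affine_gaussianReal (μ : ℝ) (v : ℝ≥0) (α β : ℝ) :
    ∫⁻ x, ENNReal.ofReal (exp (α * x + β)) ∂gaussianReal μ v
      = ENNReal.ofReal (exp (β + μ * α + v * α ^ 2 / 2)) := by
  have hint : Integrable (fun x ↦ exp (α * x) * exp β) (gaussianReal μ v) :=
    (integrable_exp_mul_gaussianReal α).mul_const _
  simp_rw [exp_add (α * _)]
  rw [← ofReal_integral_eq_lintegral_ofReal hint (ae_of_all _ fun _ ↦ by positivity),
    integral_mul_const, ← mgf, mgf_fun_id_gaussianReal, ← exp_add]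
  ring_nf

lemma exp_mul_max_zero_le {c s : ℝ} (hc : 0 ≤ c) (hs : 0 < s) (y : ℝ) :
    exp (c * max 0 y) ≤ exp (c * y) + c * s / exp 1 * exp (-y / s) := by
  rcases le_or_gt 0 y with hy | hy
  · rw [max_eq_right hy]
    have : 0 ≤ c * s / exp 1 * exp (-y / s) := by positivity
    linarith
  · have htail : -(c * y) ≤ c * s / exp 1 * exp (-y / s) := by
      calc -(c * y) = c * s / exp 1 * (exp 1 * (-y / s)) := by field_simp
        _ ≤ c * s / exp 1 * exp (-y / s) := by gcongr; exact exp_one_mul_le_exp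
    rw [max_eq_left hy.le, mul_zero, exp_zero]
    linarith [add_one_le_exp (c * y)]

lemma add_le_mul_exp {X t : ℝ} (hX : 1 ≤ X) (ht : 0 ≤ t) : X + t ≤ X * exp t := by
  nlinarith [add_one_le_exp t]

lemma exp_neg_div_add_sq_div_le_one {a σ s : ℝ} (hs : 0 < s) (h : σ ^ 2 ≤ 2 * a * s) :
    exp (-a / s + σ ^ 2 / (2 * s ^ 2)) ≤ 1 := by
  have : -a / s + σ ^ 2 / (2 * s ^ 2) = (σ ^ 2 - 2 * a * s) / (2 * s ^ 2) := by
    field_simp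
    ring
  rw [exp_le_one_iff, this]
  exact div_nonpos_of_nonpos_of_nonneg (by linarith) (by positivity)

lemma div_mul_exp_one_le_sqrt (ξ q k θ : ℝ) :
    ξ / (q * exp 1) ≤ √(ξ ^ 2 / (4 * π * q ^ 2)
      + 1 / (2 * π) * √(ξ ^ 4 / (4 * q ^ 4) + k ^ 2 * θ ^ 2 / q ^ 2)) := by
  have hsq : ξ ^ 2 / (2 * q ^ 2) ≤ √(ξ ^ 4 / (4 * q ^ 4) + k ^ 2 * θ ^ 2 / q ^ 2) := by
    rw [le_sqrt (by positivity) (by positivity)]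
    have : 0 ≤ k ^ 2 * θ ^ 2 / q ^ 2 := by positivity
    linarith [show (ξ ^ 2 / (2 * q ^ 2)) ^ 2 = ξ ^ 4 / (4 * q ^ 4) by ring]
  have h2π : 2 * π ≤ exp 1 ^ 2 := by nlinarith [exp_one_gt_d9, pi_lt_d2]
  refine (le_abs_self _).trans (abs_le_sqrt ?_)
  calc (ξ / (q * exp 1)) ^ 2 = ξ ^ 2 / q ^ 2 / exp 1 ^ 2 := by ring
    _ ≤ ξ ^ 2 / q ^ 2 / (2 * π) :=
        div_le_div_of_nonneg_left (by positivity) (by positivity) h2π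
    _ = ξ ^ 2 / (4 * π * q ^ 2) + 1 / (2 * π) * (ξ ^ 2 / (2 * q ^ 2)) := by ring
    _ ≤ _ := by gcongr

lemma lintegral_exp_mul_max_zero_le {Ω : Type*} [MeasurableSpace Ω] {P : Measure Ω}
    {Z : Ω → ℝ} (hZ : P.map Z = gaussianReal 0 1) {c s : ℝ} (hc : 0 ≤ c) (hs : 0 < s)
    (a σ : ℝ) :
    ∫⁻ ω, ENNReal.ofReal (exp (c * max 0 (a + σ * Z ω))) ∂P
      ≤ ENNReal.ofReal (exp (c * a + c ^ 2 * σ ^ 2 / 2)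
        + c * s / exp 1 * exp (-a / s + σ ^ 2 / (2 * s ^ 2))) := by
  have hZm : AEMeasurable Z P := aemeasurable_of_map_neZero (by rw [hZ]; infer_instance)
  have hcs : 0 ≤ c * s / exp 1 := by positivity
  rw [← lintegral_map' (f := fun x ↦ ENNReal.ofReal (exp (c * max 0 (a + σ * x))))
    (by fun_prop) hZm, hZ]
  calc ∫⁻ x, ENNReal.ofReal (exp (c * max 0 (a + σ * x))) ∂gaussianReal 0 1
      ≤ ∫⁻ x, (ENNReal.ofReal (exp (c * σ * x + c * a))
          + ENNReal.ofReal (c * s / exp 1) * ENNReal.ofReal (exp (-σ / s * x + -a / s)))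
          ∂gaussianReal 0 1 := by
        refine lintegral_mono fun x ↦ ?_
        rw [← ENNReal.ofReal_mul hcs, ← ENNReal.ofReal_add (by positivity) (by positivity)]
        refine ENNReal.ofReal_le_ofReal ((exp_mul_max_zero_le hc hs _).trans_eq ?_)
        ring_nf
    _ = _ := by
        rw [lintegral_add_left (by fun_prop), lintegral_const_mul' _ _ ENNReal.ofReal_ne_top,
          lintegral_ofReal_exp_affine_gaussianReal, lintegral_ofReal_exp_affine_gaussianReal,
          ← ENNReal.ofReal_mul hcs, ← ENNReal.ofReal_add (by positivity) (by positivity)]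
        simp only [NNReal.coe_one]
        congr 3
        · ring
        · congr 1
          ring

theorem stmt_3_general {Ω : Type*} [MeasureSpace Ω]
    (k θ ξ δt c w : ℝ) (hk : 0 < k) (hθ : 0 < θ) (hξ : 0 < ξ)
    (hδt : 0 < δt) (hδt' : δt < 1 / k) (hc : 0 ≤ c) (hw : 0 ≤ w)
    (Z : Ω → ℝ) (hZ : Measure.map Z ℙ = gaussianReal 0 1)
    (ν : ℝ)
    (hν : ν = Real.sqrt (ξ ^ 2 / (4 * Real.pi * (1 - k * δt) ^ 2)
        + (1 / (2 * Real.pi)) * Real.sqrt (ξ ^ 4 / (4 * (1 - k * δt) ^ 4)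
            + k ^ 2 * θ ^ 2 / (1 - k * δt) ^ 2))) :
    ∫⁻ ω, ENNReal.ofReal
        (Real.exp (c * max 0 (w + k * (θ - w) * δt + ξ * Real.sqrt (w * δt) * Z ω))) ∂ℙ
      ≤ ENNReal.ofReal
          (Real.exp (c * (k * θ + ν * ξ) * δt
            + (c * (1 - k * δt) + c ^ 2 * ξ ^ 2 * δt / 2) * w)) := by
  have hq : 0 < 1 - k * δt := by
    rw [lt_div_iff₀ hk] at hδt'
    linarith
  set q := 1 - k * δt
  set a := w + k * (θ - w) * δt
  set σ := ξ * √(w * δt)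
  set s := ξ ^ 2 * δt / q
  have hs : 0 < s := by positivity
  have hsq : s * q = ξ ^ 2 * δt := div_mul_cancel₀ _ hq.ne'
  have ha : a = q * w + k * θ * δt := by ring
  have hσ2 : σ ^ 2 = s * q * w := by
    rw [mul_pow, sq_sqrt (by positivity), hsq]
    ring
  have hsqw : 0 ≤ s * q * w := mul_nonneg (mul_nonneg hs.le hq.le) hw
  have hkθ : 0 < k * θ * δt := by positivity
  have htail : exp (-a / s + σ ^ 2 / (2 * s ^ 2)) ≤ 1 :=
    exp_neg_div_add_sq_div_le_one hs (by rw [hσ2, ha]; nlinarith)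
  have hsν : c * s / exp 1 ≤ c * (ν * ξ * δt) := by
    have h := hν ▸ div_mul_exp_one_le_sqrt ξ q k θ
    calc c * s / exp 1 = c * (s * q / (q * exp 1)) := by field_simp
      _ = c * (ξ / (q * exp 1) * ξ * δt) := by rw [hsq]; ring
      _ ≤ c * (ν * ξ * δt) := by gcongr
  have hν₀ : 0 ≤ ν := hν ▸ sqrt_nonneg _
  refine (lintegral_exp_mul_max_zero_le hZ hc hs a σ).trans (ENNReal.ofReal_le_ofReal ?_)
  calc exp (c * a + c ^ 2 * σ ^ 2 / 2) + c * s / exp 1 * exp (-a / s + σ ^ 2 / (2 * s ^ 2))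
      ≤ exp (c * a + c ^ 2 * σ ^ 2 / 2) + c * (ν * ξ * δt) :=
        add_le_add le_rfl ((mul_le_of_le_one_right (by positivity) htail).trans hsν)
    _ ≤ exp (c * a + c ^ 2 * σ ^ 2 / 2) * exp (c * (ν * ξ * δt)) :=
        add_le_mul_exp (one_le_exp (by rw [ha]; positivity)) (by positivity)
    _ = _ := by
        rw [← exp_add, hσ2, ha, hsq]
        ring_nf

/-- One-step conditional estimate for the full truncation Euler scheme of the CIR process:
if `Z` is standard normal, `0 < δt < 1/k`, `c ≥ 0` and `w ≥ 0`, then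
`E[exp(c·max(0, w + k(θ−w)δt + ξ√(wδt)Z))] ≤ exp(c(kθ+νξ)δt + (c(1−kδt) + c²ξ²δt/2)w)`. -/
theorem stmt_3 {Ω : Type*} [MeasureSpace Ω] [IsProbabilityMeasure (ℙ : Measure Ω)]
    (k θ ξ δt c w : ℝ) (hk : 0 < k) (hθ : 0 < θ) (hξ : 0 < ξ)
    (hδt : 0 < δt) (hδt' : δt < 1 / k) (hc : 0 ≤ c) (hw : 0 ≤ w)
    (Z : Ω → ℝ) (hZ : Measure.map Z ℙ = gaussianReal 0 1)
    (ν : ℝ)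
    (hν : ν = Real.sqrt (ξ ^ 2 / (4 * Real.pi * (1 - k * δt) ^ 2)
        + (1 / (2 * Real.pi)) * Real.sqrt (ξ ^ 4 / (4 * (1 - k * δt) ^ 4)
            + k ^ 2 * θ ^ 2 / (1 - k * δt) ^ 2))) :
    ∫⁻ ω, ENNReal.ofReal
        (Real.exp (c * max 0 (w + k * (θ - w) * δt + ξ * Real.sqrt (w * δt) * Z ω))) ∂ℙ
      ≤ ENNReal.ofReal
          (Real.exp (c * (k * θ + ν * ξ) * δt
            + (c * (1 - k * δt) + c ^ 2 * ξ ^ 2 * δt / 2) * w)) :=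
  stmt_3_general k θ ξ δt c w hk hθ hξ hδt hδt' hc hw Z hZ ν hν
end

section
/- Fix k, θ, ξ, λ, y₀ > 0, a horizon T > 0, an integer N ≥ 1, and set δt = T/N; assume δt < δ_T for some δ_T ∈ (0, 1/k). Let Z₀, …, Z_{N−1} be i.i.d. standard normal random variables on a probability space and define ỹ₀ = y₀ and ỹ_{n+1} = ỹ_n + k(θ − ỹ_n⁺)·δt + ξ·√(ỹ_n⁺)·√(δt)·Z_n for 0 ≤ n < N, where x⁺ = max(x,0). Suppose η ≥ 1 satisfies η²λξ²T² − 2η(1 + kT) + 2 ≤ 0. Then E[exp(λ·δt·Σ_{n=0}^{N−1} ỹ_n⁺)] < exp( (η/2)·λ·T²·(kθ + νξ) + η·λ·T·y₀ ), where ν = √( ξ²/(4π(1 − k·δ_T)²) + (1/(2π))·√( ξ⁴/(4(1 − k·δ_T)⁴) + k²θ²/(1 − k·δ_T)² ) ). -/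
/-!
Backward induction along the chain, one Gaussian at a time. For `μ ≥ 0` and a current state `y`,
the next state `y'` satisfies `E[exp(μ y'⁺)] ≤ exp((μ(1 - kδt) + μ²ξ²δt/2) y⁺ + μ(kθ + νξ)δt)`.
For `y ≤ 0` the step is deterministic. For `y > 0` it is a Gaussian `m + sZ` with
`m ≥ (1 - kδ_T) y`, and `exp(μ(m + sZ)⁺) ≤ exp(μ(m + sZ)) + μ(m + sZ)⁻`: the first term is a
Gaussian moment generating function, and bounding the negative part by an exponential shows that
the second has expectation at most `μs²/(e m) ≤ μνξδt`. Iterating gives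
`E[exp(λδt Σ ỹₙ⁺)] ≤ exp(u_N y₀ + (kθ + νξ)δt Σ_{j<N} u_j)` for `u₀ = 0`,
`u_{j+1} = λδt + u_j(1 - kδt) + u_j²ξ²δt/2`, and the condition on `η` makes `u_j ≤ ηλ·jδt` an
invariant of this recursion up to time `T`.
-/

open MeasureTheory ProbabilityTheory Real Finset

lemma ofReal_exp_add (a b : ℝ) :
    ENNReal.ofReal (exp (a + b)) = ENNReal.ofReal (exp a) * ENNReal.ofReal (exp b) := by
  rw [exp_add, ENNReal.ofReal_mul (exp_pos a).le]

lemma lintegral_pi_fin_succ_le {α : Type*} [MeasurableSpace α] (ρ : Measure α) [SigmaFinite ρ]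
    {n : ℕ} (f : α → (Fin n → α) → ENNReal) :
    ∫⁻ z, f (z 0) (Fin.tail z) ∂Measure.pi (fun _ : Fin (n + 1) => ρ)
      ≤ ∫⁻ x, ∫⁻ z, f x z ∂Measure.pi (fun _ : Fin n => ρ) ∂ρ := by
  have := (measurePreserving_piFinSuccAbove (fun _ : Fin (n + 1) => ρ) 0).lintegral_comp_emb
    (MeasurableEquiv.measurableEmbedding _) fun p => f p.1 p.2
  exact this.trans_le (lintegral_prod_le _)

lemma lintegral_comp_eq_lintegral_pi_of_iIndepFun {Ω ι E : Type*} [MeasurableSpace Ω]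
    [MeasurableSpace E] [Fintype ι] {μ : Measure Ω} {ρ : Measure E}
    [IsProbabilityMeasure ρ] {X : ι → Ω → E} (hindep : iIndepFun X μ)
    (hlaw : ∀ i, μ.map (X i) = ρ) {f : (ι → E) → ENNReal} (hf : Measurable f) :
    ∫⁻ ω, f (fun i => X i ω) ∂μ = ∫⁻ z, f z ∂Measure.pi (fun _ : ι => ρ) := by
  have hX : ∀ i, AEMeasurable (X i) μ := fun i =>
    .of_map_ne_zero (by rw [hlaw i]; exact IsProbabilityMeasure.ne_zero ρ)
  rw [← funext hlaw, ← hindep.map_fun_eq_pi_map hX,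
    lintegral_map' hf.aemeasurable (aemeasurable_pi_lambda _ hX)]

lemma lintegral_const_mul_exp_mul_gaussianReal {a : ℝ} (ha : 0 ≤ a) (c : ℝ) :
    ∫⁻ x, ENNReal.ofReal (a * exp (c * x)) ∂gaussianReal 0 1
      = ENNReal.ofReal (a * exp (c ^ 2 / 2)) := by
  rw [← ofReal_integral_eq_lintegral_ofReal ((integrable_exp_mul_gaussianReal c).const_mul a)
    (.of_forall fun _ => by positivity), integral_const_mul]
  have hmgf := congrFun (mgf_id_gaussianReal (μ := 0) (v := 1)) c
  simp only [mgf, id] at hmgf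
  rw [hmgf]
  norm_num

lemma exp_mul_posPart_le (μ t : ℝ) :
    exp (μ * max t 0) ≤ exp (μ * t) + μ * max (-t) 0 := by
  rcases le_total t 0 with ht | ht
  · rw [max_eq_right ht, max_eq_left (neg_nonneg.mpr ht), mul_zero, exp_zero]
    linarith [add_one_le_exp (μ * t)]
  · rw [max_eq_left ht, max_eq_right (neg_nonpos.mpr ht)]
    simp

lemma posPart_le_exp_mul_div {c : ℝ} (hc : 0 < c) (t : ℝ) :
    max t 0 ≤ exp (c * t) / (c * exp 1) := by
  refine max_le ?_ (by positivity)
  rw [le_div_iff₀ (by positivity), ← mul_assoc, mul_comm t,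
    show exp (c * t) = exp (c * t - 1) * exp 1 by rw [← exp_add]; ring_nf]
  nlinarith [add_one_le_exp (c * t - 1), exp_pos 1]

lemma lintegral_exp_mul_posPart_gaussianReal_le {m s μ : ℝ} (hm : 0 < m) (hs : 0 < s)
    (hμ : 0 ≤ μ) :
    ∫⁻ x, ENNReal.ofReal (exp (μ * max (m + s * x) 0)) ∂gaussianReal 0 1
      ≤ ENNReal.ofReal (exp (μ * m + μ ^ 2 * s ^ 2 / 2) + μ * s ^ 2 / (m * exp 1)) := by
  -- The tilt `c = m / s²` makes the Gaussian factor `exp (-c m + c² s² / 2)` at most `1`.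
  obtain ⟨c, hc⟩ : ∃ c, c = m / s ^ 2 := ⟨_, rfl⟩
  have hc0 : 0 < c := by rw [hc]; positivity
  have hpoint : ∀ x, exp (μ * max (m + s * x) 0)
      ≤ exp (μ * m) * exp ((μ * s) * x)
        + μ * exp (-(c * m)) / (c * exp 1) * exp (-(c * s) * x) := by
    intro x
    have hneg := posPart_le_exp_mul_div hc0 (-(m + s * x))
    calc exp (μ * max (m + s * x) 0) ≤ exp (μ * (m + s * x)) + μ * max (-(m + s * x)) 0 :=
          exp_mul_posPart_le μ _
      _ ≤ exp (μ * (m + s * x)) + μ * (exp (c * -(m + s * x)) / (c * exp 1)) := by gcongr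
      _ = _ := by
        rw [show exp (μ * (m + s * x)) = exp (μ * m) * exp ((μ * s) * x) by
            rw [← exp_add]; ring_nf,
          show exp (c * -(m + s * x)) = exp (-(c * m)) * exp (-(c * s) * x) by
            rw [← exp_add]; ring_nf]
        ring
  calc ∫⁻ x, ENNReal.ofReal (exp (μ * max (m + s * x) 0)) ∂gaussianReal 0 1
      ≤ ∫⁻ x, (ENNReal.ofReal (exp (μ * m) * exp ((μ * s) * x))
          + ENNReal.ofReal (μ * exp (-(c * m)) / (c * exp 1) * exp (-(c * s) * x)))
          ∂gaussianReal 0 1 := by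
        refine lintegral_mono fun x => ?_
        rw [← ENNReal.ofReal_add (by positivity) (by positivity)]
        exact ENNReal.ofReal_le_ofReal (hpoint x)
    _ = ENNReal.ofReal (exp (μ * m) * exp ((μ * s) ^ 2 / 2)
          + μ * exp (-(c * m)) / (c * exp 1) * exp ((-(c * s)) ^ 2 / 2)) := by
        rw [lintegral_add_left (by fun_prop),
          lintegral_const_mul_exp_mul_gaussianReal (by positivity),
          lintegral_const_mul_exp_mul_gaussianReal (by positivity),
          ENNReal.ofReal_add (by positivity) (by positivity)]
    _ ≤ _ := by
        refine ENNReal.ofReal_le_ofReal (add_le_add (le_of_eq ?_) ?_)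
        · rw [← exp_add]; ring_nf
        · have htilt : exp (-(c * m)) * exp ((-(c * s)) ^ 2 / 2) ≤ 1 := by
            rw [← exp_add, exp_le_one_iff, hc]
            field_simp
            nlinarith
          calc μ * exp (-(c * m)) / (c * exp 1) * exp ((-(c * s)) ^ 2 / 2)
              = μ / (c * exp 1) * (exp (-(c * m)) * exp ((-(c * s)) ^ 2 / 2)) := by ring
            _ ≤ μ / (c * exp 1) := mul_le_of_le_one_right (by positivity) htilt
            _ = μ * s ^ 2 / (m * exp 1) := by rw [hc]; field_simp

noncomputable def fteStep (k θ ξ δt y x : ℝ) : ℝ :=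
  y + k * (θ - max y 0) * δt + ξ * √(max y 0) * √δt * x

lemma measurable_fteStep (k θ ξ δt : ℝ) : Measurable (fteStep k θ ξ δt).uncurry := by
  unfold fteStep Function.uncurry
  fun_prop

lemma lintegral_exp_mul_posPart_fteStep_le {k θ ξ δt β ν μ : ℝ} (hk : 0 ≤ k) (hθ : 0 ≤ θ)
    (hξ : 0 < ξ) (hδt : 0 < δt) (hβ : 0 < β) (hβδt : β ≤ 1 - k * δt)
    (hν : ξ / (exp 1 * β) ≤ ν) (hμ : 0 ≤ μ) (w : ℝ) :
    ∫⁻ x, ENNReal.ofReal (exp (μ * max (fteStep k θ ξ δt w x) 0)) ∂gaussianReal 0 1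
      ≤ ENNReal.ofReal (exp ((μ * (1 - k * δt) + μ ^ 2 * ξ ^ 2 * δt / 2) * max w 0
          + μ * (k * θ + ν * ξ) * δt)) := by
  have hν0 : 0 ≤ ν := le_trans (by positivity) hν
  rcases le_or_gt w 0 with hw | hw
  · have hdrift : max (w + k * θ * δt) 0 ≤ k * θ * δt := max_le (by linarith) (by positivity)
    simp only [fteStep, max_eq_right hw, Real.sqrt_zero, mul_zero, zero_mul, sub_zero, add_zero,
      lintegral_const, measure_univ, mul_one, zero_add]
    refine ENNReal.ofReal_le_ofReal (exp_le_exp.mpr ?_)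
    nlinarith [mul_le_mul_of_nonneg_left hdrift hμ,
      mul_nonneg (mul_nonneg hμ (mul_nonneg hν0 hξ.le)) hδt.le]
  · set m := (1 - k * δt) * w + k * θ * δt with hm
    set s := ξ * √w * √δt with hs
    have hmw : β * w ≤ m := by nlinarith [mul_nonneg (mul_nonneg hk hθ) hδt.le]
    have hm0 : 0 < m := lt_of_lt_of_le (mul_pos hβ hw) hmw
    have hs0 : 0 < s := by positivity
    have hs2 : s ^ 2 = ξ ^ 2 * w * δt := by
      rw [hs, mul_pow, mul_pow, sq_sqrt hw.le, sq_sqrt hδt.le]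
    have hstep : ∀ x, fteStep k θ ξ δt w x = m + s * x := by
      intro x; simp only [fteStep, max_eq_left hw.le]; ring
    have hneg : μ * s ^ 2 / (m * exp 1) ≤ μ * (ν * ξ * δt) := by
      rw [mul_div_assoc]
      refine mul_le_mul_of_nonneg_left ?_ hμ
      rw [div_le_iff₀ (by positivity), hs2]
      have hξν : ξ ≤ ν * (exp 1 * β) := (div_le_iff₀ (by positivity)).mp hν
      have hwδt : 0 ≤ ξ * w * δt := by positivity
      calc ξ ^ 2 * w * δt = ξ * (ξ * w * δt) := by ring
        _ ≤ ν * (exp 1 * β) * (ξ * w * δt) := mul_le_mul_of_nonneg_right hξν hwδt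
        _ = ν * ξ * δt * (β * w * exp 1) := by ring
        _ ≤ ν * ξ * δt * (m * exp 1) := by gcongr
    simp only [hstep, max_eq_left hw.le]
    refine (lintegral_exp_mul_posPart_gaussianReal_le hm0 hs0 hμ).trans
      (ENNReal.ofReal_le_ofReal ?_)
    have hA : 0 ≤ μ * m + μ ^ 2 * s ^ 2 / 2 := by positivity
    have hB : 0 ≤ μ * (ν * ξ * δt) := by positivity
    calc exp (μ * m + μ ^ 2 * s ^ 2 / 2) + μ * s ^ 2 / (m * exp 1)
        ≤ exp (μ * m + μ ^ 2 * s ^ 2 / 2) * (1 + μ * (ν * ξ * δt)) := by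
          nlinarith [one_le_exp hA]
      _ ≤ exp (μ * m + μ ^ 2 * s ^ 2 / 2) * exp (μ * (ν * ξ * δt)) := by
          gcongr; linarith [add_one_le_exp (μ * (ν * ξ * δt))]
      _ = _ := by rw [← exp_add, hs2, hm]; ring_nf

-- `∑_{j<n} (y_j)⁺` along `y₀ = y`, `y_{j+1} = F y_j (z j)`, recursing on the first step.
noncomputable def pathPosSum (F : ℝ → ℝ → ℝ) : (n : ℕ) → ℝ → (Fin n → ℝ) → ℝ
  | 0, _, _ => 0
  | n + 1, y, z => max y 0 + pathPosSum F n (F y (z 0)) (Fin.tail z)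

lemma sum_range_posPart_eq_pathPosSum {F : ℝ → ℝ → ℝ} {n : ℕ} {Y w : ℕ → ℝ}
    (hY : ∀ j < n, Y (j + 1) = F (Y j) (w j)) :
    ∑ j ∈ range n, max (Y j) 0 = pathPosSum F n (Y 0) (fun i : Fin n => w i) := by
  induction n generalizing Y w with
  | zero => rfl
  | succ n ih =>
    rw [sum_range_succ', add_comm, ih (Y := fun j => Y (j + 1)) (w := fun j => w (j + 1))
      fun j hj => hY (j + 1) (by omega), hY 0 n.succ_pos]
    rfl

lemma measurable_pathPosSum {F : ℝ → ℝ → ℝ} (hF : Measurable (Function.uncurry F)) (n : ℕ) :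
    Measurable fun p : ℝ × (Fin n → ℝ) => pathPosSum F n p.1 p.2 := by
  induction n with
  | zero => exact measurable_const
  | succ n ih =>
    have hnext : Measurable fun p : ℝ × (Fin (n + 1) → ℝ) => (F p.1 (p.2 0), Fin.tail p.2) :=
      (hF.comp (measurable_fst.prodMk ((measurable_pi_apply 0).comp measurable_snd))).prodMk
        (by fun_prop)
    exact (measurable_fst.max measurable_const).add (ih.comp hnext)

theorem lintegral_exp_mul_pathPosSum_le {F : ℝ → ℝ → ℝ} (ρ : Measure ℝ) [SigmaFinite ρ]
    {c : ℝ} {g b : ℝ → ℝ} {u : ℕ → ℝ}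
    (hstep : ∀ μ, 0 ≤ μ → ∀ w, ∫⁻ x, ENNReal.ofReal (exp (μ * max (F w x) 0)) ∂ρ
      ≤ ENNReal.ofReal (exp (g μ * max w 0 + b μ)))
    (hu : ∀ n, u (n + 1) = c + g (u n)) (hu0 : ∀ n, 0 ≤ u n) (n : ℕ) (y : ℝ) :
    ∫⁻ z, ENNReal.ofReal (exp (c * pathPosSum F n y z)) ∂Measure.pi (fun _ : Fin n => ρ)
      ≤ ENNReal.ofReal (exp (u n * max y 0 + ∑ j ∈ range n, b (u j))) := by
  induction n generalizing y with
  | zero =>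
    simp only [pathPosSum, mul_zero, exp_zero, ENNReal.ofReal_one, lintegral_const,
      Measure.pi_univ, Finset.univ_eq_empty, prod_empty, mul_one, range_zero, sum_empty,
      add_zero]
    exact ENNReal.one_le_ofReal.mpr (one_le_exp (mul_nonneg (hu0 0) (le_max_right y 0)))
  | succ n ih =>
    set S := ∑ j ∈ range n, b (u j)
    calc ∫⁻ z, ENNReal.ofReal (exp (c * pathPosSum F (n + 1) y z)) ∂Measure.pi (fun _ => ρ)
        = ∫⁻ z, ENNReal.ofReal (exp (c * max y 0)) *
            ENNReal.ofReal (exp (c * pathPosSum F n (F y (z 0)) (Fin.tail z)))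
            ∂Measure.pi (fun _ => ρ) := by
          simp only [pathPosSum, mul_add, ofReal_exp_add]
      _ ≤ ∫⁻ x, ∫⁻ z, ENNReal.ofReal (exp (c * max y 0)) *
            ENNReal.ofReal (exp (c * pathPosSum F n (F y x) z))
            ∂Measure.pi (fun _ : Fin n => ρ) ∂ρ := lintegral_pi_fin_succ_le ρ _
      _ ≤ ∫⁻ x, ENNReal.ofReal (exp (c * max y 0)) *
            ENNReal.ofReal (exp (u n * max (F y x) 0 + S)) ∂ρ := by
          refine lintegral_mono fun x => ?_
          rw [lintegral_const_mul' _ _ ENNReal.ofReal_ne_top]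
          exact mul_le_mul_right (ih _) _
      _ = ENNReal.ofReal (exp (c * max y 0 + S)) *
            ∫⁻ x, ENNReal.ofReal (exp (u n * max (F y x) 0)) ∂ρ := by
          rw [← lintegral_const_mul' _ _ ENNReal.ofReal_ne_top]
          congr with x
          rw [← ofReal_exp_add, ← ofReal_exp_add]
          ring_nf
      _ ≤ ENNReal.ofReal (exp (c * max y 0 + S)) *
            ENNReal.ofReal (exp (g (u n) * max y 0 + b (u n))) :=
          mul_le_mul_right (hstep _ (hu0 n) y) _
      _ = ENNReal.ofReal (exp (u (n + 1) * max y 0 + ∑ j ∈ range (n + 1), b (u j))) := by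
          rw [← ofReal_exp_add, hu, sum_range_succ]
          congr 2
          ring

lemma two_mul_pi_le_exp_two : 2 * π ≤ exp 2 := by
  have hsq : exp 2 = exp 1 ^ 2 := by rw [← exp_nat_mul]; norm_num
  nlinarith [pi_lt_d2, exp_one_gt_d9]

lemma div_exp_one_mul_le_sqrt {ξ β c : ℝ} (hβ : 0 < β) (hc : 0 ≤ c) :
    ξ / (exp 1 * β) ≤ √(ξ ^ 2 / (4 * π * β ^ 2)
      + (1 / (2 * π)) * √(ξ ^ 4 / (4 * β ^ 4) + c)) := by
  refine (le_abs_self _).trans (abs_le_sqrt ?_)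
  have hroot : ξ ^ 2 / (2 * β ^ 2) ≤ √(ξ ^ 4 / (4 * β ^ 4) + c) := by
    rw [show ξ ^ 4 / (4 * β ^ 4) = (ξ ^ 2 / (2 * β ^ 2)) ^ 2 by ring]
    exact le_sqrt_of_sq_le (by linarith)
  calc (ξ / (exp 1 * β)) ^ 2 = ξ ^ 2 / (exp 2 * β ^ 2) := by
        rw [div_pow, mul_pow, ← exp_nat_mul]; norm_num
    _ ≤ ξ ^ 2 / (2 * π * β ^ 2) := by
        gcongr
        exact two_mul_pi_le_exp_two
    _ = ξ ^ 2 / (4 * π * β ^ 2) + (1 / (2 * π)) * (ξ ^ 2 / (2 * β ^ 2)) := by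
        field_simp; ring
    _ ≤ _ := by gcongr

noncomputable def expWeight (lam δt k ξ : ℝ) : ℕ → ℝ
  | 0 => 0
  | j + 1 => lam * δt + (expWeight lam δt k ξ j * (1 - k * δt)
      + expWeight lam δt k ξ j ^ 2 * ξ ^ 2 * δt / 2)

lemma expWeight_nonneg {lam δt k ξ : ℝ} (hlam : 0 ≤ lam) (hδt : 0 ≤ δt) (hkδt : k * δt ≤ 1)
    (j : ℕ) : 0 ≤ expWeight lam δt k ξ j := by
  induction j with
  | zero => exact le_rfl
  | succ j ih =>
    have : 0 ≤ expWeight lam δt k ξ j * (1 - k * δt) := mul_nonneg ih (by linarith)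
    simp only [expWeight]
    positivity

lemma expWeight_step_le {lam δt k ξ η T A : ℝ} (hlam : 0 ≤ lam) (hδt : 0 ≤ δt) (hη : 1 ≤ η)
    (hηineq : η ^ 2 * lam * ξ ^ 2 * T ^ 2 - 2 * η * (1 + k * T) + 2 ≤ 0)
    (hA : 0 ≤ A) (hAT : A ≤ η * lam * T) :
    lam * δt + (A * (1 - k * δt) + A ^ 2 * ξ ^ 2 * δt / 2) ≤ A + η * lam * δt := by
  -- `lam + A²ξ²/2 - A k` is convex in `A`; at `A = η lam T` the bound is exactly `hηineq`.
  have hquad : lam + A ^ 2 * ξ ^ 2 / 2 - A * k ≤ η * lam := by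
    have hsq : A ^ 2 * ξ ^ 2 ≤ A * (η * lam * T) * ξ ^ 2 := by gcongr; nlinarith
    rcases le_or_gt (η * lam * T * ξ ^ 2 / 2) k with hslope | hslope
    · nlinarith [mul_nonneg hA (sub_nonneg.mpr hslope)]
    · nlinarith [mul_le_mul_of_nonneg_right hAT (sub_nonneg.mpr hslope.le),
        mul_nonpos_of_nonneg_of_nonpos hlam hηineq]
  nlinarith [mul_le_mul_of_nonneg_left hquad hδt]

lemma expWeight_le {lam δt k ξ η T : ℝ} (hlam : 0 ≤ lam) (hδt : 0 ≤ δt) (hkδt : k * δt ≤ 1)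
    (hη : 1 ≤ η) (hηineq : η ^ 2 * lam * ξ ^ 2 * T ^ 2 - 2 * η * (1 + k * T) + 2 ≤ 0)
    {j : ℕ} (hj : δt * j ≤ T) : expWeight lam δt k ξ j ≤ η * lam * δt * j := by
  induction j with
  | zero => simp [expWeight]
  | succ j ih =>
    have hjT : δt * j ≤ T := le_trans (by gcongr; simp) hj
    have hle := ih hjT
    have hAT : expWeight lam δt k ξ j ≤ η * lam * T :=
      hle.trans (by rw [mul_assoc]; gcongr)
    calc expWeight lam δt k ξ (j + 1) ≤ expWeight lam δt k ξ j + η * lam * δt :=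
          expWeight_step_le hlam hδt hη hηineq (expWeight_nonneg hlam hδt hkδt j) hAT
      _ ≤ η * lam * δt * (j + 1 : ℕ) := by push_cast; linarith

lemma sum_range_mul_lt {a : ℝ} (ha : 0 < a) {N : ℕ} (hN : 1 ≤ N) :
    ∑ j ∈ range N, a * j < a * N ^ 2 / 2 := by
  induction N, hN using Nat.le_induction with
  | base => norm_num; positivity
  | succ n hn ih =>
    rw [sum_range_succ]; push_cast; nlinarith

lemma expWeight_exponent_lt {lam δt k ξ η T d y₀ : ℝ} {N : ℕ} (hN : 1 ≤ N) (hlam : 0 < lam)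
    (hδt : 0 < δt) (hkδt : k * δt ≤ 1) (hη : 1 ≤ η)
    (hηineq : η ^ 2 * lam * ξ ^ 2 * T ^ 2 - 2 * η * (1 + k * T) + 2 ≤ 0) (hTN : δt * N = T)
    (hd : 0 < d) (hy₀ : 0 ≤ y₀) :
    expWeight lam δt k ξ N * y₀ + ∑ j ∈ range N, expWeight lam δt k ξ j * d * δt
      < η / 2 * lam * T ^ 2 * d + η * lam * T * y₀ := by
  have hweight : ∀ j ≤ N, expWeight lam δt k ξ j ≤ η * lam * δt * j := fun j hj =>
    expWeight_le hlam.le hδt.le hkδt hη hηineq (by rw [← hTN]; gcongr)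
  have hlast : expWeight lam δt k ξ N * y₀ ≤ η * lam * T * y₀ := by
    gcongr
    exact (hweight N le_rfl).trans_eq (by rw [← hTN]; ring)
  have hsum : ∑ j ∈ range N, expWeight lam δt k ξ j * d * δt < η / 2 * lam * T ^ 2 * d :=
    calc ∑ j ∈ range N, expWeight lam δt k ξ j * d * δt
        ≤ ∑ j ∈ range N, η * lam * δt ^ 2 * d * j := by
          refine sum_le_sum fun j hj => ?_
          have := mul_le_mul_of_nonneg_right (hweight j (mem_range.mp hj).le)
            (mul_nonneg hd.le hδt.le)
          linarith
      _ < η * lam * δt ^ 2 * d * N ^ 2 / 2 := sum_range_mul_lt (by positivity) hN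
      _ = η / 2 * lam * T ^ 2 * d := by rw [← hTN]; ring
  linarith

lemma lintegral_exp_mul_pathPosSum_fteStep_le {k θ ξ δt β ν lam : ℝ} (hk : 0 ≤ k)
    (hθ : 0 ≤ θ) (hξ : 0 < ξ) (hδt : 0 < δt) (hβ : 0 < β) (hβδt : β ≤ 1 - k * δt)
    (hν : ξ / (exp 1 * β) ≤ ν) (hlam : 0 ≤ lam) (N : ℕ) (y : ℝ) :
    ∫⁻ z, ENNReal.ofReal (exp (lam * δt * pathPosSum (fteStep k θ ξ δt) N y z))
        ∂Measure.pi (fun _ : Fin N => gaussianReal 0 1)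
      ≤ ENNReal.ofReal (exp (expWeight lam δt k ξ N * max y 0
          + ∑ j ∈ range N, expWeight lam δt k ξ j * (k * θ + ν * ξ) * δt)) :=
  lintegral_exp_mul_pathPosSum_le (gaussianReal 0 1)
    (fun _ hμ w => lintegral_exp_mul_posPart_fteStep_le hk hθ hξ hδt hβ hβδt hν hμ w)
    (fun _ => rfl) (expWeight_nonneg hlam hδt.le (by linarith)) N y

theorem stmt_5_general {Ω : Type*} [MeasureSpace Ω]
    (k θ ξ lam y₀ T : ℝ) (hk : 0 < k) (hθ : 0 < θ) (hξ : 0 < ξ)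
    (hlam : 0 < lam) (hy₀ : 0 < y₀) (hT : 0 < T)
    (N : ℕ) (hN : 1 ≤ N) (δt : ℝ) (hδt : δt = T / N)
    (δT : ℝ) (hδT : δT ∈ Set.Ioo 0 (1 / k)) (hδtδT : δt < δT)
    (Z : ℕ → Ω → ℝ)
    (hZindep : iIndepFun
        (fun i : Fin N => Z i) ℙ)
    (hZlaw : ∀ i : Fin N, Measure.map (Z i) ℙ = gaussianReal 0 1)
    (Y : ℕ → Ω → ℝ) (hY0 : ∀ ω, Y 0 ω = y₀)
    (hYrec : ∀ n < N, ∀ ω, Y (n + 1) ω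
        = Y n ω + k * (θ - max (Y n ω) 0) * δt
          + ξ * Real.sqrt (max (Y n ω) 0) * Real.sqrt δt * Z n ω)
    (η : ℝ) (hη : 1 ≤ η)
    (hηineq : η ^ 2 * lam * ξ ^ 2 * T ^ 2 - 2 * η * (1 + k * T) + 2 ≤ 0)
    (ν : ℝ)
    (hν : ν = Real.sqrt (ξ ^ 2 / (4 * Real.pi * (1 - k * δT) ^ 2)
        + (1 / (2 * Real.pi)) * Real.sqrt (ξ ^ 4 / (4 * (1 - k * δT) ^ 4)
            + k ^ 2 * θ ^ 2 / (1 - k * δT) ^ 2))) :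
    ∫⁻ ω, ENNReal.ofReal
        (Real.exp (lam * δt * ∑ n ∈ Finset.range N, max (Y n ω) 0)) ∂ℙ
      < ENNReal.ofReal
          (Real.exp (η / 2 * lam * T ^ 2 * (k * θ + ν * ξ) + η * lam * T * y₀)) := by
  have hNpos : (0 : ℝ) < N := by exact_mod_cast hN
  have hδt0 : 0 < δt := by rw [hδt]; positivity
  have hTN : δt * N = T := by rw [hδt]; field_simp
  have hβ : 0 < 1 - k * δT := by
    have := (lt_div_iff₀ hk).mp hδT.2
    linarith
  have hβδt : 1 - k * δT ≤ 1 - k * δt := by nlinarith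
  have hνξ : ξ / (exp 1 * (1 - k * δT)) ≤ ν := hν ▸ div_exp_one_mul_le_sqrt hβ (by positivity)
  have hdrift0 : 0 < k * θ + ν * ξ :=
    add_pos (mul_pos hk hθ) (mul_pos (lt_of_lt_of_le (by positivity) hνξ) hξ)
  have hpath : ∀ ω, ∑ n ∈ range N, max (Y n ω) 0
      = pathPosSum (fteStep k θ ξ δt) N y₀ (fun i : Fin N => Z i ω) := fun ω => by
    rw [← hY0 ω]
    exact sum_range_posPart_eq_pathPosSum (Y := fun n => Y n ω) (w := fun n => Z n ω)
      fun j hj => hYrec j hj ω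
  have hmeas : Measurable fun z : Fin N → ℝ => pathPosSum (fteStep k θ ξ δt) N y₀ z :=
    (measurable_pathPosSum (measurable_fteStep k θ ξ δt) N).comp measurable_prodMk_left
  simp_rw [hpath]
  rw [lintegral_comp_eq_lintegral_pi_of_iIndepFun hZindep hZlaw
    ((hmeas.const_mul _).exp.ennreal_ofReal)]
  refine (lintegral_exp_mul_pathPosSum_fteStep_le hk.le hθ.le hξ hδt0 hβ hβδt hνξ hlam.le N y₀
    ).trans_lt ?_
  rw [ENNReal.ofReal_lt_ofReal_iff (exp_pos _), exp_lt_exp, max_eq_left hy₀.le]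
  exact expWeight_exponent_lt hN hlam hδt0 (by linarith) hη hηineq hTN hdrift0 hy₀.le

/-- Explicit exponential moment bound (3.17.2) for the full truncation Euler chain of the
CIR process: `E[exp(λ δt Σ_{n<N} ỹ_n⁺)] < exp((η/2)λT²(kθ+νξ) + ηλT y₀)`. -/
theorem stmt_5 {Ω : Type*} [MeasureSpace Ω] [IsProbabilityMeasure (ℙ : Measure Ω)]
    (k θ ξ lam y₀ T : ℝ) (hk : 0 < k) (hθ : 0 < θ) (hξ : 0 < ξ)
    (hlam : 0 < lam) (hy₀ : 0 < y₀) (hT : 0 < T)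
    (N : ℕ) (hN : 1 ≤ N) (δt : ℝ) (hδt : δt = T / N)
    (δT : ℝ) (hδT : δT ∈ Set.Ioo 0 (1 / k)) (hδtδT : δt < δT)
    (Z : ℕ → Ω → ℝ)
    (hZindep : iIndepFun
        (fun i : Fin N => Z i) ℙ)
    (hZlaw : ∀ i : Fin N, Measure.map (Z i) ℙ = gaussianReal 0 1)
    (Y : ℕ → Ω → ℝ) (hY0 : ∀ ω, Y 0 ω = y₀)
    (hYrec : ∀ n < N, ∀ ω, Y (n + 1) ω
        = Y n ω + k * (θ - max (Y n ω) 0) * δt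
          + ξ * Real.sqrt (max (Y n ω) 0) * Real.sqrt δt * Z n ω)
    (η : ℝ) (hη : 1 ≤ η)
    (hηineq : η ^ 2 * lam * ξ ^ 2 * T ^ 2 - 2 * η * (1 + k * T) + 2 ≤ 0)
    (ν : ℝ)
    (hν : ν = Real.sqrt (ξ ^ 2 / (4 * Real.pi * (1 - k * δT) ^ 2)
        + (1 / (2 * Real.pi)) * Real.sqrt (ξ ^ 4 / (4 * (1 - k * δT) ^ 4)
            + k ^ 2 * θ ^ 2 / (1 - k * δT) ^ 2))) :
    ∫⁻ ω, ENNReal.ofReal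
        (Real.exp (lam * δt * ∑ n ∈ Finset.range N, max (Y n ω) 0)) ∂ℙ
      < ENNReal.ofReal
          (Real.exp (η / 2 * lam * T ^ 2 * (k * θ + ν * ξ) + η * lam * T * y₀)) :=
  stmt_5_general k θ ξ lam y₀ T hk hθ hξ hlam hy₀ hT N hN δt hδt δT hδT hδtδT Z hZindep hZlaw Y hY0
    hYrec η hη hηineq ν hν
end

section
/- Fix k, θ, ξ, y₀ > 0, a horizon T > 0, an integer N ≥ 1, and set δt = T/N. Let Z₀, …, Z_{N−1} be i.i.d. standard normal random variables on a probability space and define ỹ₀ = y₀ and ỹ_{n+1} = ỹ_n + k(θ − ỹ_n⁺)·δt + ξ·√(ỹ_n⁺)·√(δt)·Z_n for 0 ≤ n < N, where x⁺ = max(x,0). Let p > 0, let ε ∈ (0, 2k/ξ²], and let c ≥ 0 satisfy (max(0,x))^p ≤ c·exp(ε·x) for all x ∈ ℝ. Then for every n with 0 ≤ n ≤ N, E[(ỹ_n⁺)^p] ≤ c·exp(ε·(y₀ + kθT)). In particular the moments E[(ỹ_n⁺)^p] are bounded uniformly in n, N and δt. -/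
open MeasureTheory ProbabilityTheory Filter
open scoped ENNReal

/-- a.e.-modification invariance of `iIndepFun`. -/
lemma iIndepFun_ae_congr {Ω ι : Type*} {_ : MeasurableSpace Ω} {μ : Measure Ω}
    {β : ι → Type*} (m : ∀ i, MeasurableSpace (β i)) {f g : ∀ i, Ω → β i}
    (h : ∀ i, f i =ᵐ[μ] g i) (hf : iIndepFun (m := m) f μ) : iIndepFun (m := m) g μ := by
  rw [iIndepFun_iff_measure_inter_preimage_eq_mul] at hf ⊢
  intro S sets hsets
  have hpre : ∀ i : ι, (g i ⁻¹' sets i : Set Ω) =ᵐ[μ] (f i ⁻¹' sets i : Set Ω) := by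
    intro i
    filter_upwards [h i] with ω hω
    show (g i ω ∈ sets i) = (f i ω ∈ sets i)
    rw [hω]
  have hS : ∀ᵐ ω ∂μ, ∀ i ∈ S, f i ω = g i ω :=
    (MeasureTheory.ae_ball_iff S.countable_toSet).2 fun i _ => h i
  have hinter : (⋂ i ∈ S, g i ⁻¹' sets i : Set Ω) =ᵐ[μ] (⋂ i ∈ S, f i ⁻¹' sets i : Set Ω) := by
    filter_upwards [hS] with ω hω
    show (ω ∈ ⋂ i ∈ S, g i ⁻¹' sets i) = (ω ∈ ⋂ i ∈ S, f i ⁻¹' sets i)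
    simp only [Set.mem_iInter, Set.mem_preimage, eq_iff_iff]
    exact forall₂_congr fun i hi => by rw [hω i hi]
  rw [measure_congr hinter, hf S hsets]
  exact Finset.prod_congr rfl fun i _ => (measure_congr (hpre i)).symm

/-- lintegral of `exp (t x)` against the standard Gaussian. -/
lemma gauss_lintegral_exp (t : ℝ) :
    ∫⁻ x, ENNReal.ofReal (Real.exp (t * x)) ∂(gaussianReal 0 1)
      = ENNReal.ofReal (Real.exp (t ^ 2 / 2)) := by
  rw [gaussianReal_of_var_ne_zero 0 one_ne_zero]
  have hmeas : Measurable fun x : ℝ => ENNReal.ofReal (Real.exp (t * x)) := by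
    fun_prop
  rw [lintegral_withDensity_eq_lintegral_mul _ (measurable_gaussianPDF 0 1) hmeas]
  have hpt : ∀ x : ℝ, (gaussianPDF 0 1 * fun x => ENNReal.ofReal (Real.exp (t * x))) x
      = ENNReal.ofReal (Real.exp (t ^ 2 / 2)) * gaussianPDF t 1 x := by
    intro x
    simp only [Pi.mul_apply, gaussianPDF]
    rw [← ENNReal.ofReal_mul (gaussianPDFReal_nonneg 0 1 x),
      ← ENNReal.ofReal_mul (Real.exp_nonneg _)]
    congr 1
    simp only [gaussianPDFReal, NNReal.coe_one, mul_one, sub_zero]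
    rw [mul_assoc, ← Real.exp_add, mul_comm (Real.exp (t ^ 2 / 2)), mul_assoc, ← Real.exp_add]
    congr 1
    exact Real.exp_eq_exp.mpr (by ring)
  simp only [hpt]
  rw [lintegral_const_mul _ (measurable_gaussianPDF t 1),
    lintegral_gaussianPDF_eq_one t one_ne_zero, mul_one]

/-- One-step exponential moment bound. -/
lemma fte_step_bound {Ω : Type*} [MeasureSpace Ω] [IsProbabilityMeasure (ℙ : Measure Ω)]
    (k θ ξ δt ε : ℝ) (hk : 0 < k) (hδt : 0 ≤ δt) (hεpos : 0 < ε) (hεle : ε * ξ ^ 2 ≤ 2 * k)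
    (X G : Ω → ℝ) (hX : AEMeasurable X ℙ) (hG : Measure.map G ℙ = gaussianReal 0 1)
    (hind : IndepFun X G ℙ) :
    ∫⁻ ω, ENNReal.ofReal (Real.exp (ε * (X ω + k * (θ - max (X ω) 0) * δt
        + ξ * Real.sqrt (max (X ω) 0) * Real.sqrt δt * G ω))) ∂ℙ
      ≤ ENNReal.ofReal (Real.exp (ε * k * θ * δt)) * ∫⁻ ω, ENNReal.ofReal (Real.exp (ε * X ω)) ∂ℙ := by
  have hGae : AEMeasurable G ℙ := by
    apply aemeasurable_of_map_neZero
    rw [hG]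
    infer_instance
  have hmap : Measure.map (fun ω => (X ω, G ω)) ℙ = (Measure.map X ℙ).prod (Measure.map G ℙ) :=
    (indepFun_iff_map_prod_eq_prod_map_map hX hGae).1 hind
  have hPX : IsProbabilityMeasure (Measure.map X ℙ) := Measure.isProbabilityMeasure_map hX
  set F : ℝ × ℝ → ℝ≥0∞ := fun q => ENNReal.ofReal (Real.exp (ε * (q.1 + k * (θ - max q.1 0) * δt
    + ξ * Real.sqrt (max q.1 0) * Real.sqrt δt * q.2))) with hF
  have hFmeas : Measurable F := by
    apply ENNReal.measurable_ofReal.comp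
    apply Real.measurable_exp.comp
    fun_prop
  have h1 : ∫⁻ ω, F (X ω, G ω) ∂ℙ = ∫⁻ q, F q ∂((Measure.map X ℙ).prod (gaussianReal 0 1)) := by
    rw [← hG, ← hmap, lintegral_map' hFmeas.aemeasurable (hX.prodMk hGae)]
  have h2 : ∫⁻ q, F q ∂((Measure.map X ℙ).prod (gaussianReal 0 1))
      = ∫⁻ x, ∫⁻ y, F (x, y) ∂(gaussianReal 0 1) ∂(Measure.map X ℙ) :=
    lintegral_prod F hFmeas.aemeasurable
  have hinner : ∀ x : ℝ, ∫⁻ y, F (x, y) ∂(gaussianReal 0 1)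
      ≤ ENNReal.ofReal (Real.exp (ε * k * θ * δt)) * ENNReal.ofReal (Real.exp (ε * x)) := by
    intro x
    have hsq : (Real.sqrt (max x 0) * Real.sqrt δt) ^ 2 = max x 0 * δt := by
      rw [mul_pow, Real.sq_sqrt (le_max_right x 0), Real.sq_sqrt hδt]
    set A : ℝ := x + k * (θ - max x 0) * δt with hA
    set B : ℝ := ξ * Real.sqrt (max x 0) * Real.sqrt δt with hB
    have hrw : ∀ y : ℝ, F (x, y) = ENNReal.ofReal (Real.exp (ε * A)) *
        ENNReal.ofReal (Real.exp ((ε * B) * y)) := by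
      intro y
      rw [hF]
      simp only [← ENNReal.ofReal_mul (Real.exp_nonneg _), ← Real.exp_add]
      congr 2
      ring
    simp only [hrw]
    rw [lintegral_const_mul _ (by fun_prop), gauss_lintegral_exp (ε * B),
      ← ENNReal.ofReal_mul (Real.exp_nonneg _), ← Real.exp_add,
      ← ENNReal.ofReal_mul (Real.exp_nonneg _), ← Real.exp_add]
    apply ENNReal.ofReal_le_ofReal
    apply Real.exp_le_exp.2
    have hBsq : (ε * B) ^ 2 / 2 = ε * (ε * ξ ^ 2 / 2) * (max x 0 * δt) := by
      rw [hB, show (ε * (ξ * Real.sqrt (max x 0) * Real.sqrt δt)) ^ 2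
          = ε ^ 2 * ξ ^ 2 * Real.sqrt (max x 0) ^ 2 * Real.sqrt δt ^ 2 by ring,
        Real.sq_sqrt (le_max_right x 0), Real.sq_sqrt hδt]
      ring
    have hmain : ε * (ε * ξ ^ 2 / 2) * (max x 0 * δt) ≤ ε * k * (max x 0 * δt) := by
      apply mul_le_mul_of_nonneg_right _ (mul_nonneg (le_max_right x 0) hδt)
      apply mul_le_mul_of_nonneg_left _ hεpos.le
      linarith
    rw [hBsq, hA]
    nlinarith [hmain]
  calc ∫⁻ ω, ENNReal.ofReal (Real.exp (ε * (X ω + k * (θ - max (X ω) 0) * δt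
        + ξ * Real.sqrt (max (X ω) 0) * Real.sqrt δt * G ω))) ∂ℙ
      = ∫⁻ x, ∫⁻ y, F (x, y) ∂(gaussianReal 0 1) ∂(Measure.map X ℙ) := by
        rw [← h2, ← h1]
    _ ≤ ∫⁻ x, ENNReal.ofReal (Real.exp (ε * k * θ * δt)) * ENNReal.ofReal (Real.exp (ε * x))
          ∂(Measure.map X ℙ) := lintegral_mono hinner
    _ = ENNReal.ofReal (Real.exp (ε * k * θ * δt)) * ∫⁻ x, ENNReal.ofReal (Real.exp (ε * x))
          ∂(Measure.map X ℙ) := lintegral_const_mul _ (by fun_prop)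
    _ = ENNReal.ofReal (Real.exp (ε * k * θ * δt)) * ∫⁻ ω, ENNReal.ofReal (Real.exp (ε * X ω)) ∂ℙ := by
        rw [lintegral_map' (by fun_prop) hX]
/-- The full-truncation Euler recursion. -/
noncomputable def fte (k θ ξ y₀ δt : ℝ) {Ω : Type*} (Z : ℕ → Ω → ℝ) : ℕ → Ω → ℝ
  | 0 => fun _ => y₀
  | n + 1 => fun ω =>
      fte k θ ξ y₀ δt Z n ω + k * (θ - max (fte k θ ξ y₀ δt Z n ω) 0) * δt
        + ξ * Real.sqrt (max (fte k θ ξ y₀ δt Z n ω) 0) * Real.sqrt δt * Z n ω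

/-- `fte … n` is a measurable function of the first `n` noise variables. -/
lemma fte_rep (k θ ξ y₀ δt : ℝ) (n : ℕ) :
    ∃ g : (Fin n → ℝ) → ℝ, Measurable g ∧
      ∀ {Ω : Type*} (Z : ℕ → Ω → ℝ) (ω : Ω),
        fte k θ ξ y₀ δt Z n ω = g (fun i => Z i ω) := by
  induction n with
  | zero => exact ⟨fun _ => y₀, measurable_const, fun _ _ => rfl⟩
  | succ n ih =>
    obtain ⟨g, hg, hrep⟩ := ih
    refine ⟨fun v => (fun yz : ℝ × ℝ => yz.1 + k * (θ - max yz.1 0) * δt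
        + ξ * Real.sqrt (max yz.1 0) * Real.sqrt δt * yz.2)
        (g (fun i : Fin n => v i.castSucc), v (Fin.last n)), ?_, ?_⟩
    · have hstep : Measurable (fun yz : ℝ × ℝ => yz.1 + k * (θ - max yz.1 0) * δt
          + ξ * Real.sqrt (max yz.1 0) * Real.sqrt δt * yz.2) := by fun_prop
      exact hstep.comp ((hg.comp (measurable_pi_lambda _ fun i =>
        measurable_pi_apply _)).prodMk (measurable_pi_apply _))
    · intro Ω Z ω
      simp only [fte]
      rw [hrep Z ω]
      simp [Fin.coe_castSucc, Fin.val_last]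
/-- Grid-point moment bound (3.20.4) for the full truncation Euler chain of the CIR
process: if `(max 0 x)^p ≤ c·exp(εx)` for all `x` and `εξ² ≤ 2k`, then
`E[(ỹ_n⁺)^p] ≤ c·exp(ε(y₀ + kθT))` for every `0 ≤ n ≤ N`. -/
theorem stmt_10 {Ω : Type*} [MeasureSpace Ω] [IsProbabilityMeasure (ℙ : Measure Ω)]
    (k θ ξ y₀ T : ℝ) (hk : 0 < k) (hθ : 0 < θ) (hξ : 0 < ξ) (hy₀ : 0 < y₀) (hT : 0 < T)
    (N : ℕ) (hN : 1 ≤ N) (δt : ℝ) (hδt : δt = T / N)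
    (Z : ℕ → Ω → ℝ)
    (hZindep : iIndepFun
        (fun i : Fin N => Z i) ℙ)
    (hZlaw : ∀ i : Fin N, Measure.map (Z i) ℙ = gaussianReal 0 1)
    (Y : ℕ → Ω → ℝ) (hY0 : ∀ ω, Y 0 ω = y₀)
    (hYrec : ∀ n < N, ∀ ω, Y (n + 1) ω
        = Y n ω + k * (θ - max (Y n ω) 0) * δt
          + ξ * Real.sqrt (max (Y n ω) 0) * Real.sqrt δt * Z n ω)
    (p : ℝ) (hp : 0 < p) (ε : ℝ) (hε : ε ∈ Set.Ioc 0 (2 * k / ξ ^ 2))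
    (c : ℝ) (hc : 0 ≤ c) (hdom : ∀ x : ℝ, (max 0 x) ^ p ≤ c * Real.exp (ε * x)) :
    ∀ n ≤ N, ∫⁻ ω, ENNReal.ofReal ((max (Y n ω) 0) ^ p) ∂ℙ
      ≤ ENNReal.ofReal (c * Real.exp (ε * (y₀ + k * θ * T))) := by
  classical
  obtain ⟨hεpos, hεle⟩ := hε
  have hNpos : (0 : ℝ) < N := by exact_mod_cast Nat.lt_of_lt_of_le Nat.zero_lt_one hN
  have hδtpos : 0 < δt := by rw [hδt]; positivity
  have hξ2 : ε * ξ ^ 2 ≤ 2 * k := (le_div_iff₀ (by positivity)).1 hεle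
  have hZae : ∀ i : Fin N, AEMeasurable (Z i) ℙ := fun i =>
    aemeasurable_of_map_neZero (by rw [hZlaw i]; infer_instance)
  set Z' : ℕ → Ω → ℝ := fun i => if h : i < N then (hZae ⟨i, h⟩).mk (Z i) else fun _ => 0
    with hZ'def
  have hZ'meas : ∀ i : ℕ, Measurable (Z' i) := by
    intro i
    rw [hZ'def]
    dsimp only
    split_ifs with h
    · exact (hZae ⟨i, h⟩).measurable_mk
    · exact measurable_const
  have hZZ' : ∀ i : Fin N, Z i =ᵐ[ℙ] Z' i := by
    intro i
    rw [hZ'def]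
    dsimp only
    rw [dif_pos i.isLt]
    exact (hZae i).ae_eq_mk
  have hZ'indep : iIndepFun
      (fun i : Fin N => Z' i) ℙ := iIndepFun_ae_congr _ (fun i => hZZ' i) hZindep
  have hZ'law : ∀ i : Fin N, Measure.map (Z' i) ℙ = gaussianReal 0 1 := fun i => by
    rw [← Measure.map_congr (hZZ' i), hZlaw i]
  set Y' : ℕ → Ω → ℝ := fte k θ ξ y₀ δt Z' with hY'def
  have hY'meas : ∀ n, Measurable (Y' n) := by
    intro n
    induction n with
    | zero => exact measurable_const
    | succ n ih =>
      have : Y' (n + 1) = fun ω => Y' n ω + k * (θ - max (Y' n ω) 0) * δt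
          + ξ * Real.sqrt (max (Y' n ω) 0) * Real.sqrt δt * Z' n ω := rfl
      rw [this]
      have h2 := hZ'meas n
      fun_prop
  have hYY' : ∀ n ≤ N, Y n =ᵐ[ℙ] Y' n := by
    intro n hn
    induction n with
    | zero =>
      refine Filter.Eventually.of_forall fun ω => ?_
      rw [hY0 ω]; rfl
    | succ n ih =>
      have hn' : n < N := hn
      filter_upwards [ih hn'.le, hZZ' ⟨n, hn'⟩] with ω h1 h2
      rw [hYrec n hn' ω, h1, h2]; rfl
  have hind : ∀ n, n < N → IndepFun (Y' n) (Z' n) ℙ := by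
    intro n hn
    obtain ⟨g, hg, hrep⟩ := fte_rep k θ ξ y₀ δt n
    set S : Finset (Fin N) := Finset.univ.filter (fun i => (i : ℕ) < n) with hS
    set T' : Finset (Fin N) := {⟨n, hn⟩} with hT'
    have hST : Disjoint S T' := by
      rw [hT', Finset.disjoint_singleton_right, hS]
      simp
    have hbase := hZ'indep.indepFun_finset S T' hST (fun i => hZ'meas i)
    set φ : ((i : S) → ℝ) → ℝ := fun v =>
      g (fun i : Fin n => v ⟨⟨(i : ℕ), lt_trans i.isLt hn⟩, by simp [hS, i.isLt]⟩) with hφdef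
    have hφ : Measurable φ := hg.comp (measurable_pi_lambda _ fun i => measurable_pi_apply _)
    set ψ : ((i : T') → ℝ) → ℝ := fun v => v ⟨⟨n, hn⟩, Finset.mem_singleton_self _⟩ with hψdef
    have hψ : Measurable ψ := measurable_pi_apply _
    have h := hbase.comp hφ hψ
    have e1 : φ ∘ (fun a (i : S) => Z' (↑i) a) = Y' n := funext fun ω => (hrep Z' ω).symm
    have e2 : ψ ∘ (fun a (i : T') => Z' (↑i) a) = Z' n := funext fun ω => rfl
    rwa [e1, e2] at h
  have hEexp : ∀ n ≤ N, ∫⁻ ω, ENNReal.ofReal (Real.exp (ε * Y' n ω)) ∂ℙ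
      ≤ ENNReal.ofReal (Real.exp (ε * y₀ + ε * k * θ * (n * δt))) := by
    intro n
    induction n with
    | zero =>
      intro _
      have : (fun ω : Ω => ENNReal.ofReal (Real.exp (ε * Y' 0 ω)))
          = fun _ : Ω => ENNReal.ofReal (Real.exp (ε * y₀)) := rfl
      rw [this, lintegral_const, measure_univ, mul_one]
      apply ENNReal.ofReal_le_ofReal
      apply Real.exp_le_exp.2
      simp
    | succ n ih =>
      intro hn1
      have hn : n < N := hn1
      have hstep := fte_step_bound k θ ξ δt ε hk hδtpos.le hεpos hξ2 (Y' n) (Z' n)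
        (hY'meas n).aemeasurable (hZ'law ⟨n, hn⟩) (hind n hn)
      calc ∫⁻ ω, ENNReal.ofReal (Real.exp (ε * Y' (n + 1) ω)) ∂ℙ
          = ∫⁻ ω, ENNReal.ofReal (Real.exp (ε * (Y' n ω + k * (θ - max (Y' n ω) 0) * δt
              + ξ * Real.sqrt (max (Y' n ω) 0) * Real.sqrt δt * Z' n ω))) ∂ℙ := rfl
        _ ≤ ENNReal.ofReal (Real.exp (ε * k * θ * δt))
              * ∫⁻ ω, ENNReal.ofReal (Real.exp (ε * Y' n ω)) ∂ℙ := hstep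
        _ ≤ ENNReal.ofReal (Real.exp (ε * k * θ * δt))
              * ENNReal.ofReal (Real.exp (ε * y₀ + ε * k * θ * (n * δt))) :=
            mul_le_mul_right (ih hn.le) _
        _ = ENNReal.ofReal (Real.exp (ε * y₀ + ε * k * θ * ((n + 1 : ℕ) * δt))) := by
            rw [← ENNReal.ofReal_mul (Real.exp_nonneg _), ← Real.exp_add]
            congr 1
            push_cast
            ring
  intro n hn
  have h1 : ∫⁻ ω, ENNReal.ofReal ((max (Y n ω) 0) ^ p) ∂ℙ
      = ∫⁻ ω, ENNReal.ofReal ((max (Y' n ω) 0) ^ p) ∂ℙ := by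
    refine lintegral_congr_ae ?_
    filter_upwards [hYY' n hn] with ω h
    rw [h]
  rw [h1]
  have hndt : (n : ℝ) * δt ≤ T := by
    calc (n : ℝ) * δt ≤ (N : ℝ) * δt :=
          mul_le_mul_of_nonneg_right (by exact_mod_cast hn) hδtpos.le
      _ = T := by rw [hδt]; field_simp
  calc ∫⁻ ω, ENNReal.ofReal ((max (Y' n ω) 0) ^ p) ∂ℙ
      ≤ ∫⁻ ω, ENNReal.ofReal (c * Real.exp (ε * Y' n ω)) ∂ℙ := by
        refine lintegral_mono fun ω => ENNReal.ofReal_le_ofReal ?_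
        rw [max_comm]
        exact hdom _
    _ = ENNReal.ofReal c * ∫⁻ ω, ENNReal.ofReal (Real.exp (ε * Y' n ω)) ∂ℙ := by
        simp only [ENNReal.ofReal_mul hc]
        exact lintegral_const_mul _ (ENNReal.measurable_ofReal.comp
          (Real.measurable_exp.comp ((hY'meas n).const_mul ε)))
    _ ≤ ENNReal.ofReal c * ENNReal.ofReal (Real.exp (ε * y₀ + ε * k * θ * (n * δt))) :=
        mul_le_mul_right (hEexp n hn) _
    _ ≤ ENNReal.ofReal (c * Real.exp (ε * (y₀ + k * θ * T))) := by
        rw [← ENNReal.ofReal_mul hc]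
        apply ENNReal.ofReal_le_ofReal
        apply mul_le_mul_of_nonneg_left _ hc
        apply Real.exp_le_exp.2
        nlinarith [mul_le_mul_of_nonneg_left hndt (by positivity : (0:ℝ) ≤ ε * k * θ)]
end

section
/- Let ω > 1 be a real number and define f_ω, g_ω : (1,∞) → ℝ by f_ω(x) = ω²x² and g_ω(x) = ω·x·(ω·x − 1)/(x − 1). Then f_ω is strictly increasing on (1,∞), g_ω attains its global minimum over (1,∞) at x* = 1 + √(1 − 1/ω) with g_ω(x*) = (ω + √((ω−1)·ω))², f_ω(x*) = g_ω(x*), and consequently inf_{x > 1} max{ f_ω(x), g_ω(x) } = (ω + √((ω−1)·ω))². -/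
/-!
Write `s = √(1 - 1/ω)`, so that `ω s² = ω - 1`. Clearing the denominator, the inequality
`ω²(1 + s)² ≤ ωx(ωx - 1)/(x - 1)` on `x > 1` becomes the perfect square
`ωx(ωx - 1) - ω²(1 + s)²(x - 1) = ω²(x - (1 + s))²`, so `g_ω` is minimised at `x* = 1 + s`
with value `ω²(1 + s)² = f_ω(x*)`, and `ω(1 + s) = ω + √((ω - 1)ω)`. Since `max f_ω g_ω ≥ g_ω`
and the two agree at `x*`, the same value is the infimum of the maximum.
-/

lemma sqrt_sub_one_mul_self {ω : ℝ} (hω : 0 ≤ ω) :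
    Real.sqrt ((ω - 1) * ω) = ω * Real.sqrt (1 - 1 / ω) := by
  rcases hω.eq_or_lt with rfl | hω
  · simp
  rw [show (ω - 1) * ω = ω ^ 2 * (1 - 1 / ω) by field_simp,
    Real.sqrt_mul (by positivity), Real.sqrt_sq hω.le]

lemma mul_sq_sqrt_one_sub_inv {ω : ℝ} (hω : 1 ≤ ω) :
    ω * Real.sqrt (1 - 1 / ω) ^ 2 = ω - 1 := by
  have hω0 : ω ≠ 0 := by positivity
  rw [Real.sq_sqrt (by rw [sub_nonneg, div_le_one (by positivity)]; exact hω)]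
  field_simp

section
variable {ω s : ℝ}

lemma mul_mul_sub_one_sub_eq_sq (hs : ω * s ^ 2 = ω - 1) (x : ℝ) :
    ω * x * (ω * x - 1) - (ω * (1 + s)) ^ 2 * (x - 1) = ω ^ 2 * (x - (1 + s)) ^ 2 := by
  linear_combination (-(ω * x)) * hs

lemma sq_le_mul_mul_sub_one_div (hs : ω * s ^ 2 = ω - 1) {x : ℝ} (hx : 1 < x) :
    (ω * (1 + s)) ^ 2 ≤ ω * x * (ω * x - 1) / (x - 1) := by
  rw [le_div_iff₀ (sub_pos.2 hx), ← sub_nonneg, mul_mul_sub_one_sub_eq_sq hs]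
  positivity

lemma mul_mul_sub_one_div_eq_sq (hs : ω * s ^ 2 = ω - 1) (hs0 : s ≠ 0) :
    ω * (1 + s) * (ω * (1 + s) - 1) / (1 + s - 1) = (ω * (1 + s)) ^ 2 := by
  rw [add_sub_cancel_left, div_eq_iff hs0]
  linear_combination (-(ω * (1 + s))) * hs

end

lemma isLeast_image_max_of_eq_of_forall_le {α : Type*} {f g : α → ℝ} {S : Set α} {a : α}
    {m : ℝ} (ha : a ∈ S) (hfa : f a = m) (hga : g a = m) (hg : ∀ x ∈ S, m ≤ g x) :
    IsLeast ((fun x => max (f x) (g x)) '' S) m :=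
  ⟨⟨a, ha, by simp only [hfa, hga, max_self]⟩,
    by rintro _ ⟨x, hx, rfl⟩; exact (hg x hx).trans (le_max_right _ _)⟩

/-- On `(1, ∞)`, `f_ω(x) = ω²x²` is strictly increasing, `g_ω(x) = ωx(ωx−1)/(x−1)`
attains its global minimum `(ω + √((ω−1)ω))²` at `x* = 1 + √(1 − 1/ω)`, the two
functions agree at `x*`, and `inf_{x>1} max{f_ω(x), g_ω(x)} = (ω + √((ω−1)ω))²`. -/
theorem stmt_15 (ω : ℝ) (hω : 1 < ω) (f g : ℝ → ℝ)
    (hf : ∀ x, f x = ω ^ 2 * x ^ 2)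
    (hg : ∀ x, g x = ω * x * (ω * x - 1) / (x - 1))
    (xs : ℝ) (hxs : xs = 1 + Real.sqrt (1 - 1 / ω)) :
    StrictMonoOn f (Set.Ioi 1) ∧
      xs ∈ Set.Ioi (1 : ℝ) ∧
      (∀ x ∈ Set.Ioi (1 : ℝ), g xs ≤ g x) ∧
      g xs = (ω + Real.sqrt ((ω - 1) * ω)) ^ 2 ∧
      f xs = g xs ∧
      IsGLB ((fun x => max (f x) (g x)) '' Set.Ioi 1) ((ω + Real.sqrt ((ω - 1) * ω)) ^ 2) := by
  set s := Real.sqrt (1 - 1 / ω)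
  have hs : ω * s ^ 2 = ω - 1 := mul_sq_sqrt_one_sub_inv hω.le
  have hs0 : 0 < s := Real.sqrt_pos.2 (sub_pos.2 ((div_lt_one (by positivity)).2 hω))
  have hmin : (ω + Real.sqrt ((ω - 1) * ω)) ^ 2 = (ω * (1 + s)) ^ 2 := by
    rw [sqrt_sub_one_mul_self (by positivity)]; ring
  have hxs1 : xs ∈ Set.Ioi (1 : ℝ) := by rw [hxs]; exact lt_add_of_pos_right 1 hs0
  have hgxs : g xs = (ω * (1 + s)) ^ 2 := by rw [hg, hxs, mul_mul_sub_one_div_eq_sq hs hs0.ne']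
  have hfxs : f xs = (ω * (1 + s)) ^ 2 := by rw [hf, hxs]; ring
  have hgle : ∀ x ∈ Set.Ioi (1 : ℝ), (ω * (1 + s)) ^ 2 ≤ g x := fun x hx => by
    rw [hg]; exact sq_le_mul_mul_sub_one_div hs hx
  refine ⟨?_, hxs1, fun x hx => hgxs ▸ hgle x hx, hgxs.trans hmin.symm, hfxs.trans hgxs.symm,
    hmin ▸ (isLeast_image_max_of_eq_of_forall_le hxs1 hfxs hgxs hgle).isGLB⟩
  intro x hx y hy hxy
  rw [hf, hf]
  have : 0 ≤ x := zero_le_one.trans (le_of_lt hx)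
  gcongr
end

section
/- Let k and ζ be real numbers with 0 < k and ζ ≥ 2k. Then (2/√(ζ² − k²))·( π/2 + arctan( k/√(ζ² − k²) ) ) > 1/(ζ − k). -/
/-! Since `arctan` is nonnegative at a nonnegative argument, the right-hand side is at least
`π / √(ζ² - k²)`. Writing `ζ² - k² = (ζ - k)(ζ + k)` and using `ζ + k ≤ 3 (ζ - k)` (which is
`ζ ≥ 2k`) gives `√(ζ² - k²) ≤ √3 (ζ - k) < π (ζ - k)`. -/

open Real

lemma sqrt_sq_sub_sq_lt_pi_mul_sub {k ζ : ℝ} (hk : 0 < k) (hζ : 2 * k ≤ ζ) :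
    √(ζ ^ 2 - k ^ 2) < π * (ζ - k) := by
  have hζk : 0 < ζ - k := by linarith
  rw [sqrt_lt' (by positivity)]
  have h9 : 9 < π ^ 2 := by nlinarith [pi_gt_three]
  calc ζ ^ 2 - k ^ 2 = (ζ - k) * (ζ + k) := by ring
    _ ≤ 3 * (ζ - k) ^ 2 := by nlinarith
    _ < π ^ 2 * (ζ - k) ^ 2 := by gcongr; linarith
    _ = (π * (ζ - k)) ^ 2 := by ring

/-- For `0 < k` and `ζ ≥ 2k`, the critical time of Proposition 3.4.3 exceeds `1/(ζ−k)`. -/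
theorem stmt_16 (k ζ : ℝ) (hk : 0 < k) (hζ : 2 * k ≤ ζ) :
    1 / (ζ - k) <
      2 / Real.sqrt (ζ ^ 2 - k ^ 2) *
        (Real.pi / 2 + Real.arctan (k / Real.sqrt (ζ ^ 2 - k ^ 2))) := by
  have hs : 0 < √(ζ ^ 2 - k ^ 2) := sqrt_pos.2 (by nlinarith)
  have harctan : 0 ≤ arctan (k / √(ζ ^ 2 - k ^ 2)) := arctan_nonneg.2 (by positivity)
  calc 1 / (ζ - k) < π / √(ζ ^ 2 - k ^ 2) := by
        rw [div_lt_div_iff₀ (by linarith) hs]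
        linarith [sqrt_sq_sub_sq_lt_pi_mul_sub hk hζ]
    _ = 2 / √(ζ ^ 2 - k ^ 2) * (π / 2) := by ring
    _ ≤ 2 / √(ζ ^ 2 - k ^ 2) * (π / 2 + arctan (k / √(ζ ^ 2 - k ^ 2))) := by
        gcongr
        linarith
end

section
/- Let k and ζ be real numbers with 0 < k < ζ < 2k. Then (2/√(ζ² − k²))·( π/2 + arctan( k/√(ζ² − k²) ) ) > 4k/ζ². -/
/-! Writing `s = √(ζ² - k²)`, AM-GM gives `2ks ≤ k² + s² = ζ²`, i.e. `4k/ζ² ≤ 2/s`, while the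
second factor `π/2 + arctan (k/s)` exceeds `1` because `π/2 > 1` and `k/s ≥ 0`. -/

open Real

theorem two_mul_mul_sqrt_sq_sub_sq_le (a b : ℝ) : 2 * b * √(a ^ 2 - b ^ 2) ≤ a ^ 2 := by
  rcases le_total (a ^ 2 - b ^ 2) 0 with h | h
  · rw [sqrt_eq_zero'.mpr h, mul_zero]
    positivity
  · nlinarith [sq_nonneg (b - √(a ^ 2 - b ^ 2)), sq_sqrt h]

theorem one_lt_pi_div_two_add_arctan {x : ℝ} (hx : 0 ≤ x) : 1 < π / 2 + arctan x := by
  linarith [pi_gt_three, arctan_nonneg.mpr hx]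

theorem stmt_17_general (k ζ : ℝ) (hk : 0 < k) (hkζ : k < ζ) :
    4 * k / ζ ^ 2 <
      2 / Real.sqrt (ζ ^ 2 - k ^ 2) *
        (Real.pi / 2 + Real.arctan (k / Real.sqrt (ζ ^ 2 - k ^ 2))) := by
  set s := √(ζ ^ 2 - k ^ 2)
  have hs : 0 < s := sqrt_pos.mpr (by nlinarith)
  calc 4 * k / ζ ^ 2 ≤ 2 / s := by
        rw [div_le_div_iff₀ (by nlinarith) hs]
        linarith [two_mul_mul_sqrt_sq_sub_sq_le ζ k]
    _ < 2 / s * (π / 2 + arctan (k / s)) :=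
        lt_mul_of_one_lt_right (by positivity) (one_lt_pi_div_two_add_arctan (by positivity))

/-- For `0 < k < ζ < 2k`, the critical time of Proposition 3.4.3 exceeds `4k/ζ²`. -/
theorem stmt_17 (k ζ : ℝ) (hk : 0 < k) (hkζ : k < ζ) (hζ : ζ < 2 * k) :
    4 * k / ζ ^ 2 <
      2 / Real.sqrt (ζ ^ 2 - k ^ 2) *
        (Real.pi / 2 + Real.arctan (k / Real.sqrt (ζ ^ 2 - k ^ 2))) :=
  stmt_17_general k ζ hk hkζ
end
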